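/- arXiv:0811.1759 — 4 statements merged into one kernel-verified Lean document; each statement's English description precedes it below -/
import Mathlib

section
/- Let (X, ρ) be a metric space with a distinguished family of lines such that through every two points there is exactly one distinguished line, and suppose the midpoint convexity condition ρ((1/2)x⊕(1/2)y, (1/2)x⊕(1/2)z) ≤ (1/2)ρ(y,z) holds for all x,y,z. Then for all t ∈ [0,1] and all x,y,w,z, ρ((1-t)x⊕ty, (1-t)w⊕tz) ≤ (1-t)ρ(x,w) + tρ(y,z). -/
/-- A metric space with a distinguished family of (geodesic) lines, encoded by the
convex-combination map `comb t x y = (1-t)x ⊕ ty` along the unique distinguished line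
through `x` and `y`.  `dist_left`/`dist_right` say that `comb t x y` divides the segment
`[x,y]` in ratio `t : (1-t)`, and `uniq` encodes the uniqueness of the distinguished line
through a given pair of points (any point dividing `[x,y]` in the same ratio coincides
with `comb t x y`). -/
structure GeodesicStruct (X : Type*) [MetricSpace X] where
  comb : ℝ → X → X → X
  comb_zero : ∀ x y, comb 0 x y = x
  comb_one : ∀ x y, comb 1 x y = y
  dist_left : ∀ t ∈ Set.Icc (0:ℝ) 1, ∀ x y, dist (comb t x y) x = t * dist x y
  dist_right : ∀ t ∈ Set.Icc (0:ℝ) 1, ∀ x y, dist (comb t x y) y = (1 - t) * dist x y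
  uniq : ∀ t ∈ Set.Icc (0:ℝ) 1, ∀ x y z,
    dist z x = t * dist x y → dist z y = (1 - t) * dist x y → z = comb t x y

/-!
Restricted to a pair of segments `[x,y]`, `[w,z]`, the function
`g s = ρ((1-s)x⊕sy, (1-s)w⊕sz)` is continuous on `[0,1]`, and the midpoint hypothesis
(applied twice, through the triangle inequality) makes it midpoint convex, because the
midpoint of two points of a segment is again the point of that segment at the mean
parameter. A continuous midpoint convex function lies below its chord: first at the dyadic
parameters `k / 2^n`, by induction on `n`, and then everywhere by density.
-/

open Set Filter Topology

section MidpointConvex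

variable {g : ℝ → ℝ}

lemma le_chord_of_dyadic_of_midpoint_le
    (hmid : ∀ a ∈ Icc (0:ℝ) 1, ∀ b ∈ Icc (0:ℝ) 1, a ≤ b →
      g ((a + b) / 2) ≤ (g a + g b) / 2)
    (n k : ℕ) (hk : k ≤ 2 ^ n) :
    g (k / 2 ^ n) ≤ (1 - k / 2 ^ n) * g 0 + k / 2 ^ n * g 1 := by
  induction n generalizing k with
  | zero =>
    interval_cases k <;> norm_num
  | succ n ih =>
    obtain ⟨i, j, hij, hi, hj, hle⟩ :
        ∃ i j : ℕ, i + j = k ∧ i ≤ 2 ^ n ∧ j ≤ 2 ^ n ∧ i ≤ j :=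
      ⟨k / 2, k - k / 2, by omega, by rw [pow_succ] at hk; omega,
        by rw [pow_succ] at hk; omega, by omega⟩
    have hmem : ∀ m : ℕ, m ≤ 2 ^ n → (m : ℝ) / 2 ^ n ∈ Icc (0:ℝ) 1 := fun m hm =>
      ⟨by positivity, div_le_one_of_le₀ (by exact_mod_cast hm) (by positivity)⟩
    have hk_mean : (k : ℝ) / 2 ^ (n + 1) = ((i : ℝ) / 2 ^ n + (j : ℝ) / 2 ^ n) / 2 := by
      rw [← hij]; push_cast; ring
    have hord : (i : ℝ) / 2 ^ n ≤ (j : ℝ) / 2 ^ n := by gcongr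
    rw [hk_mean]
    linarith [hmid _ (hmem i hi) _ (hmem j hj) hord, ih i hi, ih j hj]

lemma tendsto_floor_mul_two_pow_div (t : ℝ) (ht : 0 ≤ t) :
    Tendsto (fun n : ℕ => (⌊t * 2 ^ n⌋₊ : ℝ) / 2 ^ n) atTop (𝓝 t) := by
  have hlow : Tendsto (fun n : ℕ => t - (1 / 2 : ℝ) ^ n) atTop (𝓝 t) := by
    simpa using tendsto_const_nhds.sub
      (tendsto_pow_atTop_nhds_zero_of_lt_one (by norm_num : (0:ℝ) ≤ 1 / 2) (by norm_num))
  refine tendsto_of_tendsto_of_tendsto_of_le_of_le hlow tendsto_const_nhds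
    (fun n => ?_) (fun n => ?_)
  · have hpos : (0:ℝ) < 2 ^ n := by positivity
    rw [le_div_iff₀ hpos, sub_mul, one_div_pow, one_div_mul_cancel hpos.ne']
    linarith [Nat.lt_floor_add_one (t * 2 ^ n)]
  · rw [div_le_iff₀ (by positivity)]
    exact Nat.floor_le (by positivity)

theorem le_chord_of_continuousOn_of_midpoint_le (hg : ContinuousOn g (Icc 0 1))
    (hmid : ∀ a ∈ Icc (0:ℝ) 1, ∀ b ∈ Icc (0:ℝ) 1, a ≤ b →
      g ((a + b) / 2) ≤ (g a + g b) / 2)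
    {t : ℝ} (ht : t ∈ Icc (0:ℝ) 1) :
    g t ≤ (1 - t) * g 0 + t * g 1 := by
  set s : ℕ → ℝ := fun n => (⌊t * 2 ^ n⌋₊ : ℝ) / 2 ^ n
  have hfloor_le : ∀ n : ℕ, ⌊t * 2 ^ n⌋₊ ≤ 2 ^ n := fun n =>
    Nat.floor_le_of_le (by push_cast; nlinarith [ht.2, pow_pos (two_pos : (0:ℝ) < 2) n])
  have hs_mem : ∀ n, s n ∈ Icc (0:ℝ) 1 := fun n =>
    ⟨by positivity, div_le_one_of_le₀ (by exact_mod_cast hfloor_le n) (by positivity)⟩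
  have hs : Tendsto s atTop (𝓝 t) := tendsto_floor_mul_two_pow_div t ht.1
  have hgs : Tendsto (g ∘ s) atTop (𝓝 (g t)) :=
    (hg t ht).tendsto.comp (tendsto_nhdsWithin_iff.mpr ⟨hs, Eventually.of_forall hs_mem⟩)
  have hchord : Tendsto (fun n => (1 - s n) * g 0 + s n * g 1) atTop
      (𝓝 ((1 - t) * g 0 + t * g 1)) :=
    ((tendsto_const_nhds.sub hs).mul tendsto_const_nhds).add (hs.mul tendsto_const_nhds)
  exact le_of_tendsto_of_tendsto' hgs hchord fun n =>
    le_chord_of_dyadic_of_midpoint_le hmid n _ (hfloor_le n)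

end MidpointConvex

namespace GeodesicStruct

variable {X : Type*} [MetricSpace X] (G : GeodesicStruct X)

lemma eq_comb_of_dist_le {t : ℝ} (ht : t ∈ Icc (0:ℝ) 1) {x y z : X}
    (hx : dist z x ≤ t * dist x y) (hy : dist z y ≤ (1 - t) * dist x y) :
    z = G.comb t x y := by
  have htri := dist_triangle_left x y z
  exact G.uniq t ht x y z (by linarith) (by linarith)

lemma comb_symm {t : ℝ} (ht : t ∈ Icc (0:ℝ) 1) (x y : X) :
    G.comb t x y = G.comb (1 - t) y x := by
  refine G.uniq (1 - t) ⟨by linarith [ht.2], by linarith [ht.1]⟩ y x _ ?_ ?_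
  · rw [G.dist_right t ht, dist_comm x y]
  · rw [G.dist_left t ht, dist_comm x y, sub_sub_cancel]

lemma dist_comb_comb {s t : ℝ} (hs : s ∈ Icc (0:ℝ) 1) (ht : t ∈ Icc (0:ℝ) 1)
    (hst : s ≤ t) (x y : X) :
    dist (G.comb s x y) (G.comb t x y) = (t - s) * dist x y := by
  rcases ht.1.eq_or_lt with rfl | ht0
  · rw [le_antisymm hst hs.1, dist_self, sub_self, zero_mul]
  -- `comb s x y` is found on the subsegment `[x, comb t x y]`, at parameter `s / t`.
  set m := G.comb t x y
  have hu : s / t ∈ Icc (0:ℝ) 1 := ⟨div_nonneg hs.1 ht0.le, div_le_one_of_le₀ hst ht0.le⟩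
  have hxm : dist x m = t * dist x y := by rw [dist_comm]; exact G.dist_left t ht x y
  have hpx : dist (G.comb (s / t) x m) x = s * dist x y := by
    rw [G.dist_left _ hu, hxm]; field_simp
  have hpm : dist (G.comb (s / t) x m) m = (t - s) * dist x y := by
    rw [G.dist_right _ hu, hxm]; field_simp
  have hp : G.comb (s / t) x m = G.comb s x y := by
    refine G.eq_comb_of_dist_le hs hpx.le ?_
    calc dist (G.comb (s / t) x m) y ≤ dist (G.comb (s / t) x m) m + dist m y :=
          dist_triangle _ _ _
      _ = (1 - s) * dist x y := by rw [hpm, G.dist_right t ht]; ring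
  rw [← hp, hpm]

lemma comb_half_comb_comb {a b : ℝ} (ha : a ∈ Icc (0:ℝ) 1) (hb : b ∈ Icc (0:ℝ) 1)
    (hab : a ≤ b) (x y : X) :
    G.comb (1 / 2) (G.comb a x y) (G.comb b x y) = G.comb ((a + b) / 2) x y := by
  have hhalf : (1 / 2 : ℝ) ∈ Icc (0:ℝ) 1 := by norm_num
  have hab_dist := G.dist_comb_comb ha hb hab x y
  set m := G.comb (1 / 2) (G.comb a x y) (G.comb b x y)
  refine G.eq_comb_of_dist_le ⟨by linarith [ha.1, hb.1], by linarith [ha.2, hb.2]⟩ ?_ ?_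
  · calc dist m x ≤ dist m (G.comb a x y) + dist (G.comb a x y) x := dist_triangle _ _ _
      _ = (a + b) / 2 * dist x y := by rw [G.dist_left _ hhalf, hab_dist, G.dist_left a ha]; ring
  · calc dist m y ≤ dist m (G.comb b x y) + dist (G.comb b x y) y := dist_triangle _ _ _
      _ = (1 - (a + b) / 2) * dist x y := by
        rw [G.dist_right _ hhalf, hab_dist, G.dist_right b hb]; ring

lemma continuousOn_comb (x y : X) : ContinuousOn (fun t => G.comb t x y) (Icc 0 1) := by
  refine (LipschitzOnWith.of_dist_le_mul fun s hs t ht => ?_).continuousOn (K := nndist x y)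
  rcases le_total s t with hst | hts
  · rw [G.dist_comb_comb hs ht hst, coe_nndist, Real.dist_eq, abs_sub_comm,
      abs_of_nonneg (sub_nonneg.mpr hst), mul_comm]
  · rw [dist_comm, G.dist_comb_comb ht hs hts, coe_nndist, Real.dist_eq,
      abs_of_nonneg (sub_nonneg.mpr hts), mul_comm]

section Midpoint

variable (hmid : ∀ x y z : X, dist (G.comb (1/2) x y) (G.comb (1/2) x z) ≤ (1/2) * dist y z)
include hmid

lemma dist_comb_half_le_of_midpoint (p q p' q' : X) :
    dist (G.comb (1/2) p q) (G.comb (1/2) p' q') ≤ (1/2) * dist p p' + (1/2) * dist q q' := by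
  have hswap : ∀ u v : X, G.comb (1/2) u v = G.comb (1/2) v u := fun u v => by
    rw [G.comb_symm (by norm_num) u v]; norm_num
  calc dist (G.comb (1/2) p q) (G.comb (1/2) p' q')
      ≤ dist (G.comb (1/2) p q) (G.comb (1/2) p q')
        + dist (G.comb (1/2) q' p) (G.comb (1/2) q' p') := by
        rw [hswap q' p, hswap q' p']; exact dist_triangle _ _ _
    _ ≤ (1/2) * dist p p' + (1/2) * dist q q' := by linarith [hmid p q q', hmid q' p p']

lemma dist_comb_mean_le {a b : ℝ} (ha : a ∈ Icc (0:ℝ) 1) (hb : b ∈ Icc (0:ℝ) 1)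
    (hab : a ≤ b) (x y w z : X) :
    dist (G.comb ((a + b) / 2) x y) (G.comb ((a + b) / 2) w z) ≤
      (dist (G.comb a x y) (G.comb a w z) + dist (G.comb b x y) (G.comb b w z)) / 2 := by
  rw [← G.comb_half_comb_comb ha hb hab, ← G.comb_half_comb_comb ha hb hab]
  linarith [G.dist_comb_half_le_of_midpoint hmid (G.comb a x y) (G.comb b x y)
    (G.comb a w z) (G.comb b w z)]

end Midpoint

end GeodesicStruct

/-- If the midpoint convexity condition
ρ((1/2)x⊕(1/2)y, (1/2)x⊕(1/2)z) ≤ (1/2)ρ(y,z) holds, then the full convexity condition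
ρ((1-t)x⊕ty, (1-t)w⊕tz) ≤ (1-t)ρ(x,w) + tρ(y,z) holds for all t ∈ [0,1]. -/
theorem convexity_from_midpoint_convexity {X : Type*} [MetricSpace X] (G : GeodesicStruct X)
    (hmid : ∀ x y z : X,
      dist (G.comb (1/2) x y) (G.comb (1/2) x z) ≤ (1/2) * dist y z) :
    ∀ t ∈ Set.Icc (0:ℝ) 1, ∀ x y w z : X,
      dist (G.comb t x y) (G.comb t w z) ≤ (1 - t) * dist x w + t * dist y z := by
  intro t ht x y w z
  have hcont : ContinuousOn (fun s => dist (G.comb s x y) (G.comb s w z)) (Icc 0 1) :=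
    continuous_dist.comp_continuousOn ((G.continuousOn_comb x y).prodMk (G.continuousOn_comb w z))
  have hchord := le_chord_of_continuousOn_of_midpoint_le hcont
    (fun a ha b hb hab => G.dist_comb_mean_le hmid ha hb hab x y w z) ht
  simpa only [G.comb_zero, G.comb_one] using hchord
end

section
/- For A ∈ B and vectors V ∈ L(K,H), the Fréchet derivative of the Möbius transformation M_B at a point A is given by D M_B(A)V = (1-BB*)^{1/2}(1+AB*)^{-1} V (1+B*A)^{-1}(1-B*B)^{1/2}. In particular, D M_B(0)V = (1-BB*)^{1/2} V (1-B*B)^{1/2}. -/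
open ContinuousLinearMap

variable {K H : Type*}
  [NormedAddCommGroup H] [InnerProductSpace ℂ H] [CompleteSpace H]
  [NormedAddCommGroup K] [InnerProductSpace ℂ K] [CompleteSpace K]

/-- The square root of a (positive) operator, via continuous functional calculus. -/
noncomputable def opSqrt {E : Type*} [NormedAddCommGroup E] [InnerProductSpace ℂ E]
    [CompleteSpace E] (T : E →L[ℂ] E) : E →L[ℂ] E := cfc Real.sqrt T

/-- The inverse square root of a (positive invertible) operator. -/
noncomputable def opInvSqrt {E : Type*} [NormedAddCommGroup E] [InnerProductSpace ℂ E]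
    [CompleteSpace E] (T : E →L[ℂ] E) : E →L[ℂ] E := cfc (fun x : ℝ => (Real.sqrt x)⁻¹) T

/-- The Möbius transformation M_A(X) = (1-AA*)^{-1/2}(A+X)(1+A*X)^{-1}(1-A*A)^{1/2}. -/
noncomputable def mobius (A X : K →L[ℂ] H) : K →L[ℂ] H :=
  opInvSqrt (1 - A ∘L adjoint A) ∘L (A + X) ∘L
    Ring.inverse (1 + adjoint A ∘L X) ∘L opSqrt (1 - adjoint A ∘L A)

/-! Write `M_B(X) = C (B + X) (1 + B*X)⁻¹ S` with the constants `C = (1 - BB*)^{-1/2}` and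
`S = (1 - B*B)^{1/2}`. The product rule and the derivative `V ↦ -R V R` of inversion give
`D M_B(A) V = C (1 - (B + A)(1 + B*A)⁻¹ B*) V (1 + B*A)⁻¹ S`. The push-through identity
`(1 + B*A)⁻¹ B* = B* (1 + AB*)⁻¹` turns the middle factor into `(1 - BB*)(1 + AB*)⁻¹`, and
`C (1 - BB*) = (1 - BB*)^{1/2}` by functional calculus, the spectrum of `1 - BB*` being positive
when `‖B‖ < 1`. -/

-- The factor `‖1‖` (rather than `[NormOneClass A]`) lets `A` be the zero algebra.
lemma pos_of_mem_spectrum_one_sub {A : Type*} [NormedRing A] [NormedAlgebra ℝ A] [CompleteSpace A]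
    {b : A} (hb : ‖b‖ * ‖(1 : A)‖ < 1) {x : ℝ} (hx : x ∈ spectrum ℝ (1 - b)) : 0 < x := by
  rw [← map_one (algebraMap ℝ A), ← spectrum.singleton_sub_eq] at hx
  obtain ⟨_, rfl, y, hy, rfl⟩ := hx
  have hy' : |y| ≤ ‖b‖ * ‖(1 : A)‖ := by
    simpa using spectrum.subset_closedBall_norm_mul (𝕜 := ℝ) b hy
  linarith [le_abs_self y]

lemma opInvSqrt_mul_self {E : Type*} [NormedAddCommGroup E] [InnerProductSpace ℂ E]
    [CompleteSpace E] {T : E →L[ℂ] E} (hT : IsSelfAdjoint T)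
    (hpos : ∀ x ∈ spectrum ℝ T, 0 < x) : opInvSqrt T * T = opSqrt T := by
  have hcont : ContinuousOn (fun x : ℝ => (Real.sqrt x)⁻¹) (spectrum ℝ T) :=
    Real.continuous_sqrt.continuousOn.inv₀ fun x hx => Real.sqrt_ne_zero'.mpr (hpos x hx)
  calc opInvSqrt T * T = cfc (fun x : ℝ => (Real.sqrt x)⁻¹) T * cfc (fun x : ℝ => x) T := by
        rw [cfc_id' ℝ T, opInvSqrt]
    _ = opSqrt T := by
        rw [← cfc_mul _ _ T hcont, opSqrt]
        exact cfc_congr fun x _ => by simp only [inv_mul_eq_div, Real.div_sqrt]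

section
variable {𝕜 E E' F G : Type*} [NontriviallyNormedField 𝕜]
  [NormedAddCommGroup E] [NormedSpace 𝕜 E] [NormedAddCommGroup E'] [NormedSpace 𝕜 E']
  [NormedAddCommGroup F] [NormedSpace 𝕜 F] [NormedAddCommGroup G] [NormedSpace 𝕜 G]

lemma isUnit_one_add_comp [CompleteSpace E] (S : F →L[𝕜] E) (T : E →L[𝕜] F)
    (h : ‖S‖ * ‖T‖ < 1) : IsUnit (1 + S ∘L T) := by
  rw [← sub_neg_eq_add]
  exact isUnit_one_sub_of_norm_lt_one ((norm_neg _).trans_le (opNorm_comp_le S T) |>.trans_lt h)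

lemma inverse_one_add_comp_comp (A : E →L[𝕜] F) (T : F →L[𝕜] E)
    (hTA : IsUnit (1 + T ∘L A)) (hAT : IsUnit (1 + A ∘L T)) :
    Ring.inverse (1 + T ∘L A) ∘L T = T ∘L Ring.inverse (1 + A ∘L T) := by
  have hpush : T ∘L (1 + A ∘L T) = (1 + T ∘L A) ∘L T := by
    simp only [comp_add, add_comp, comp_assoc]; rfl
  calc Ring.inverse (1 + T ∘L A) ∘L T
      = Ring.inverse (1 + T ∘L A) ∘L T ∘L ((1 + A ∘L T) * Ring.inverse (1 + A ∘L T)) := by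
        rw [Ring.mul_inverse_cancel _ hAT]; rfl
    _ = (Ring.inverse (1 + T ∘L A) * (1 + T ∘L A)) ∘L T ∘L Ring.inverse (1 + A ∘L T) := by
        rw [mul_def, mul_def, ← comp_assoc T, hpush]; simp only [comp_assoc]
    _ = T ∘L Ring.inverse (1 + A ∘L T) := by
        rw [Ring.inverse_mul_cancel _ hTA]; rfl

lemma one_sub_add_comp_inverse_comp (B A : E →L[𝕜] F) (T : F →L[𝕜] E)
    (hTA : IsUnit (1 + T ∘L A)) (hAT : IsUnit (1 + A ∘L T)) :
    1 - (B + A) ∘L Ring.inverse (1 + T ∘L A) ∘L T =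
      (1 - B ∘L T) ∘L Ring.inverse (1 + A ∘L T) := by
  rw [inverse_one_add_comp_comp A T hTA hAT]
  calc 1 - (B + A) ∘L T ∘L Ring.inverse (1 + A ∘L T)
      = (1 + A ∘L T) * Ring.inverse (1 + A ∘L T) - (B + A) ∘L T ∘L Ring.inverse (1 + A ∘L T) := by
        rw [Ring.mul_inverse_cancel _ hAT]
    _ = (1 - B ∘L T) ∘L Ring.inverse (1 + A ∘L T) := by
        simp only [mul_def, add_comp, sub_comp, comp_assoc]; abel

lemma hasFDerivAt_comp_inverse_one_add_comp [CompleteSpace E] (C : F →L[𝕜] G) (B : E →L[𝕜] F)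
    (T : F →L[𝕜] E) (S : E' →L[𝕜] E) {A : E →L[𝕜] F} (hA : IsUnit (1 + T ∘L A)) :
    ∃ D : (E →L[𝕜] F) →L[𝕜] (E' →L[𝕜] G),
      HasFDerivAt (fun X => C ∘L (B + X) ∘L Ring.inverse (1 + T ∘L X) ∘L S) D A ∧
      ∀ V, D V = C ∘L (1 - (B + A) ∘L Ring.inverse (1 + T ∘L A) ∘L T) ∘L V ∘L
        Ring.inverse (1 + T ∘L A) ∘L S := by
  obtain ⟨u, hu⟩ := hA
  have hinv : HasFDerivAt (fun X : E →L[𝕜] F => Ring.inverse (1 + T ∘L X))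
      ((-mulLeftRight 𝕜 _ ↑u⁻¹ ↑u⁻¹).comp (compL 𝕜 E F E T)) A := by
    have h := hasFDerivAt_ringInverse (𝕜 := 𝕜) u
    rw [hu] at h
    exact h.comp A (((compL 𝕜 E F E T).hasFDerivAt).const_add 1)
  have hD := (((hasFDerivAt_const C A).clm_comp ((hasFDerivAt_id A).const_add B)).clm_comp
    (hinv.clm_comp (hasFDerivAt_const S A)))
  refine ⟨_, hD, fun V => ?_⟩
  rw [← hu, Ring.inverse_unit]
  simp only [add_apply, coe_comp, Function.comp_apply, compL_apply, comp_zero, zero_add, add_zero,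
    flip_apply, neg_apply, mulLeftRight_apply, coe_id', id_eq, mul_def, neg_comp, comp_neg]
  simp only [comp_sub, sub_comp, comp_assoc, one_def, id_comp]
  abel

end

lemma opInvSqrt_comp_one_sub_comp_adjoint {B : K →L[ℂ] H} (hB : ‖B‖ < 1) :
    opInvSqrt (1 - B ∘L adjoint B) ∘L (1 - B ∘L adjoint B) = opSqrt (1 - B ∘L adjoint B) := by
  have hnorm : ‖B ∘L adjoint B‖ = ‖B‖ * ‖B‖ := by
    simpa using norm_adjoint_comp_self (adjoint B)
  refine opInvSqrt_mul_self ((IsSelfAdjoint.one _).sub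
    (isPositive_self_comp_adjoint B).isSelfAdjoint) fun x hx => ?_
  refine pos_of_mem_spectrum_one_sub ?_ hx
  calc ‖B ∘L adjoint B‖ * ‖(1 : H →L[ℂ] H)‖ ≤ ‖B‖ * ‖B‖ := by
        rw [hnorm]; exact mul_le_of_le_one_right (by positivity) norm_id_le
    _ < 1 := by nlinarith [norm_nonneg B]

lemma mobius_hasFDerivAt_of_norm_lt_one {B A : K →L[ℂ] H} (hB : ‖B‖ < 1) (hA : ‖A‖ < 1) :
    ∃ D : (K →L[ℂ] H) →L[ℂ] (K →L[ℂ] H), HasFDerivAt (mobius B) D A ∧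
      ∀ V : K →L[ℂ] H, D V =
        opSqrt (1 - B ∘L adjoint B) ∘L Ring.inverse (1 + A ∘L adjoint B) ∘L V ∘L
          Ring.inverse (1 + adjoint B ∘L A) ∘L opSqrt (1 - adjoint B ∘L B) := by
  have hBA : ‖adjoint B‖ * ‖A‖ < 1 := by
    rw [LinearIsometryEquiv.norm_map]; nlinarith [norm_nonneg A, norm_nonneg B]
  have hAB : ‖A‖ * ‖adjoint B‖ < 1 := by rwa [mul_comm]
  obtain ⟨D, hD, hDV⟩ := hasFDerivAt_comp_inverse_one_add_comp
    (opInvSqrt (1 - B ∘L adjoint B)) B (adjoint B) (opSqrt (1 - adjoint B ∘L B))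
    (isUnit_one_add_comp _ _ hBA)
  refine ⟨D, hD, fun V => ?_⟩
  rw [hDV, one_sub_add_comp_inverse_comp B A (adjoint B) (isUnit_one_add_comp _ _ hBA)
    (isUnit_one_add_comp _ _ hAB)]
  simp only [← comp_assoc, opInvSqrt_comp_one_sub_comp_adjoint hB]

/-- The Fréchet derivative of M_B at A ∈ 𝓑 is
V ↦ (1-BB*)^{1/2}(1+AB*)^{-1} V (1+B*A)^{-1}(1-B*B)^{1/2}; in particular at A = 0 it is
V ↦ (1-BB*)^{1/2} V (1-B*B)^{1/2}. -/
theorem mobius_hasFDerivAt (B A : K →L[ℂ] H) (hB : ‖B‖ < 1) (hA : ‖A‖ < 1) :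
    (∃ D : (K →L[ℂ] H) →L[ℂ] (K →L[ℂ] H), HasFDerivAt (mobius B) D A ∧
      ∀ V : K →L[ℂ] H, D V =
        opSqrt (1 - B ∘L adjoint B) ∘L Ring.inverse (1 + A ∘L adjoint B) ∘L V ∘L
          Ring.inverse (1 + adjoint B ∘L A) ∘L opSqrt (1 - adjoint B ∘L B)) ∧
    (∃ D₀ : (K →L[ℂ] H) →L[ℂ] (K →L[ℂ] H), HasFDerivAt (mobius B) D₀ 0 ∧
      ∀ V : K →L[ℂ] H, D₀ V =
        opSqrt (1 - B ∘L adjoint B) ∘L V ∘L opSqrt (1 - adjoint B ∘L B)) := by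
  refine ⟨mobius_hasFDerivAt_of_norm_lt_one hB hA, ?_⟩
  obtain ⟨D₀, hD₀, hD₀V⟩ := mobius_hasFDerivAt_of_norm_lt_one hB (A := 0) (by simp)
  refine ⟨D₀, hD₀, fun V => ?_⟩
  simp only [hD₀V, comp_zero, zero_comp, add_zero, Ring.inverse_one]
  rfl
end

section
/- Every Möbius transformation M_A on the open unit ball B of L(K,H) is Lipschitz: for all X, Y ∈ B, ‖M_A(X) - M_A(Y)‖ ≤ 3D^{5/2}‖X - Y‖, where D = (1 - ‖A‖)^{-1}. -/
open ContinuousLinearMap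

variable {K H : Type*}
  [NormedAddCommGroup H] [InnerProductSpace ℂ H] [CompleteSpace H]
  [NormedAddCommGroup K] [InnerProductSpace ℂ K] [CompleteSpace K]

/-! `M_A(X) - M_A(Y) = L ∘ (F(X) - F(Y)) ∘ R` with `L = (1-AA*)^{-1/2}`, `R = (1-A*A)^{1/2}` and
`F(X) = (A+X)(1+A*X)⁻¹`. For `T ≥ 0` the spectrum of `1 - T` lies in `[1 - ‖T‖, 1]`, so
functional calculus gives `‖L‖ ≤ D^{1/2}` and `‖R‖ ≤ 1`. The resolvent identity gives
`F(X) - F(Y) = (X-Y)(1+A*X)⁻¹ + (A+Y)(1+A*X)⁻¹A*(Y-X)(1+A*Y)⁻¹`, and the Neumann series bounds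
both inverses by `D`, so `‖F(X) - F(Y)‖ ≤ (D + 2D²)‖X-Y‖ ≤ 3D²‖X-Y‖`. -/

open scoped InnerProduct

section CStarAlgebra

variable {𝒜 : Type*} [CStarAlgebra 𝒜] [PartialOrder 𝒜] [StarOrderedRing 𝒜]

lemma spectrum_one_sub_subset_Icc {a : 𝒜} (ha : 0 ≤ a) :
    spectrum ℝ (1 - a) ⊆ Set.Icc (1 - ‖a‖) 1 := by
  have hsa : IsSelfAdjoint (1 - a) := .sub (.one _) ha.isSelfAdjoint
  have hlower : algebraMap ℝ 𝒜 (1 - ‖a‖) ≤ 1 - a := by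
    rw [map_sub, map_one]
    exact sub_le_sub_left ha.isSelfAdjoint.le_algebraMap_norm_self 1
  intro x hx
  exact ⟨(algebraMap_le_iff_le_spectrum hsa).mp hlower x hx,
    (CFC.le_one_iff (1 - a) hsa).mp (sub_le_self 1 ha) x hx⟩

lemma norm_cfc_sqrt_one_sub_le_one {a : 𝒜} (ha : 0 ≤ a) : ‖cfc Real.sqrt (1 - a)‖ ≤ 1 :=
  norm_cfc_le zero_le_one fun x hx => by
    rw [Real.norm_of_nonneg (Real.sqrt_nonneg x), Real.sqrt_le_one]
    exact (spectrum_one_sub_subset_Icc ha hx).2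

lemma norm_cfc_inv_sqrt_one_sub_le {a : 𝒜} (ha : 0 ≤ a) (ha1 : ‖a‖ < 1) :
    ‖cfc (fun x : ℝ => (√x)⁻¹) (1 - a)‖ ≤ (√(1 - ‖a‖))⁻¹ :=
  norm_cfc_le (by positivity) fun x hx => by
    have hx' := (spectrum_one_sub_subset_Icc ha hx).1
    rw [Real.norm_of_nonneg (by positivity)]
    gcongr

end CStarAlgebra

section Banach

variable {𝕜 E F G : Type*} [NontriviallyNormedField 𝕜]
  [NormedAddCommGroup E] [NormedSpace 𝕜 E] [NormedAddCommGroup F] [NormedSpace 𝕜 F]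
  [NormedAddCommGroup G] [NormedSpace 𝕜 G]

lemma norm_comp_le_of_norm_le_one (f : F →L[𝕜] G) {g : E →L[𝕜] F} (hg : ‖g‖ ≤ 1) :
    ‖f ∘L g‖ ≤ ‖f‖ :=
  calc ‖f ∘L g‖ ≤ ‖f‖ * ‖g‖ := opNorm_comp_le _ _
    _ ≤ ‖f‖ * 1 := by gcongr
    _ = ‖f‖ := mul_one _

lemma norm_ringInverse_one_add_le [CompleteSpace E] (t : E →L[𝕜] E) (ht : ‖t‖ < 1) :
    ‖Ring.inverse (1 + t)‖ ≤ (1 - ‖t‖)⁻¹ := by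
  have hneg : ‖-t‖ < 1 := by rwa [norm_neg]
  have hgeom := tsum_geometric_le_of_norm_lt_one (-t) hneg
  have hone : ‖(1 : E →L[𝕜] E)‖ ≤ 1 := norm_id_le
  rw [norm_neg] at hgeom
  rw [← sub_neg_eq_add, NormedRing.inverse_one_sub _ hneg]
  show ‖∑' n : ℕ, (-t) ^ n‖ ≤ _
  linarith

end Banach

lemma norm_adjoint_comp_le (A : K →L[ℂ] H) {X : K →L[ℂ] H} (hX : ‖X‖ ≤ 1) :
    ‖A† ∘L X‖ ≤ ‖A‖ :=
  adjoint.norm_map A ▸ norm_comp_le_of_norm_le_one _ hX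

lemma isUnit_one_add_adjoint_comp {A X : K →L[ℂ] H} (hA : ‖A‖ < 1) (hX : ‖X‖ ≤ 1) :
    IsUnit (1 + A† ∘L X) := by
  rw [← sub_neg_eq_add]
  refine isUnit_one_sub_of_norm_lt_one ?_
  rw [norm_neg]
  exact (norm_adjoint_comp_le A hX).trans_lt hA

lemma norm_ringInverse_one_add_adjoint_comp_le {A X : K →L[ℂ] H} (hA : ‖A‖ < 1)
    (hX : ‖X‖ ≤ 1) : ‖Ring.inverse (1 + A† ∘L X)‖ ≤ (1 - ‖A‖)⁻¹ := by
  have hAX := norm_adjoint_comp_le A hX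
  calc ‖Ring.inverse (1 + A† ∘L X)‖ ≤ (1 - ‖A† ∘L X‖)⁻¹ :=
        norm_ringInverse_one_add_le _ (hAX.trans_lt hA)
    _ ≤ (1 - ‖A‖)⁻¹ := by gcongr

noncomputable def linFrac (A X : K →L[ℂ] H) : K →L[ℂ] H :=
  (A + X) ∘L Ring.inverse (1 + A† ∘L X)

lemma mobius_eq_comp_linFrac (A X : K →L[ℂ] H) :
    mobius A X = opInvSqrt (1 - A ∘L A†) ∘L linFrac A X ∘L opSqrt (1 - A† ∘L A) := by
  simp only [mobius, linFrac, comp_assoc]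

lemma linFrac_sub_linFrac {A X Y : K →L[ℂ] H} (hX : IsUnit (1 + A† ∘L X))
    (hY : IsUnit (1 + A† ∘L Y)) :
    linFrac A X - linFrac A Y = (X - Y) ∘L Ring.inverse (1 + A† ∘L X) +
      (A + Y) ∘L Ring.inverse (1 + A† ∘L X) ∘L A† ∘L (Y - X) ∘L Ring.inverse (1 + A† ∘L Y) := by
  have hresolvent : Ring.inverse (1 + A† ∘L X) - Ring.inverse (1 + A† ∘L Y) =
      Ring.inverse (1 + A† ∘L X) ∘L A† ∘L (Y - X) ∘L Ring.inverse (1 + A† ∘L Y) := by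
    rw [Ring.inverse_sub_inverse (iff_of_true hX hY), add_sub_add_left_eq_sub, ← comp_sub]
    rfl
  rw [linFrac, linFrac, ← hresolvent, comp_sub]
  nth_rw 1 [show A + X = (X - Y) + (A + Y) by abel]
  rw [add_comp]
  abel

lemma norm_linFrac_sub_le {A X Y : K →L[ℂ] H} (hA : ‖A‖ < 1) (hX : ‖X‖ < 1) (hY : ‖Y‖ < 1) :
    ‖linFrac A X - linFrac A Y‖ ≤ 3 * (1 - ‖A‖)⁻¹ ^ 2 * ‖X - Y‖ := by
  set D := (1 - ‖A‖)⁻¹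
  set u := Ring.inverse (1 + A† ∘L X)
  set v := Ring.inverse (1 + A† ∘L Y)
  have hD : 1 ≤ D := (one_le_inv₀ (by linarith)).mpr (by linarith [norm_nonneg A])
  have hu : ‖u‖ ≤ D := norm_ringInverse_one_add_adjoint_comp_le hA hX.le
  have hv : ‖v‖ ≤ D := norm_ringInverse_one_add_adjoint_comp_le hA hY.le
  have hAY : ‖A + Y‖ ≤ 2 := (norm_add_le _ _).trans (by linarith)
  have hA' : ‖A†‖ ≤ 1 := by rw [adjoint.norm_map]; exact hA.le
  have hchain : ‖(A + Y) ∘L u ∘L A† ∘L (Y - X) ∘L v‖ ≤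
      ‖A + Y‖ * ‖u‖ * ‖A†‖ * ‖Y - X‖ * ‖v‖ :=
    calc _ ≤ ‖A + Y‖ * ‖u ∘L A† ∘L (Y - X) ∘L v‖ := opNorm_comp_le _ _
      _ ≤ ‖A + Y‖ * (‖u‖ * ‖A† ∘L (Y - X) ∘L v‖) := by gcongr; exact opNorm_comp_le _ _
      _ ≤ ‖A + Y‖ * (‖u‖ * (‖A†‖ * ‖(Y - X) ∘L v‖)) := by gcongr; exact opNorm_comp_le _ _
      _ ≤ ‖A + Y‖ * (‖u‖ * (‖A†‖ * (‖Y - X‖ * ‖v‖))) := by gcongr; exact opNorm_comp_le _ _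
      _ = _ := by ring
  rw [linFrac_sub_linFrac (isUnit_one_add_adjoint_comp hA hX.le)
    (isUnit_one_add_adjoint_comp hA hY.le)]
  calc _ ≤ ‖X - Y‖ * ‖u‖ + ‖A + Y‖ * ‖u‖ * ‖A†‖ * ‖Y - X‖ * ‖v‖ :=
        (norm_add_le _ _).trans (add_le_add (opNorm_comp_le _ _) hchain)
    _ ≤ ‖X - Y‖ * D + 2 * D * 1 * ‖X - Y‖ * D := by
        rw [norm_sub_rev Y X]
        gcongr
    _ ≤ 3 * D ^ 2 * ‖X - Y‖ := by nlinarith [mul_le_mul_of_nonneg_left hD (norm_nonneg (X - Y))]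

lemma norm_opSqrt_one_sub_adjoint_comp_self_le_one (A : K →L[ℂ] H) :
    ‖opSqrt (1 - A† ∘L A)‖ ≤ 1 :=
  norm_cfc_sqrt_one_sub_le_one ((nonneg_iff_isPositive _).mpr (isPositive_adjoint_comp_self A))

lemma norm_opInvSqrt_one_sub_comp_adjoint_le {A : K →L[ℂ] H} (hA : ‖A‖ < 1) :
    ‖opInvSqrt (1 - A ∘L A†)‖ ≤ √((1 - ‖A‖)⁻¹) := by
  have hAA : ‖A ∘L A†‖ ≤ ‖A‖ :=
    norm_comp_le_of_norm_le_one A (by rw [adjoint.norm_map]; exact hA.le)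
  rw [Real.sqrt_inv]
  calc ‖opInvSqrt (1 - A ∘L A†)‖ ≤ (√(1 - ‖A ∘L A†‖))⁻¹ :=
        norm_cfc_inv_sqrt_one_sub_le
          ((nonneg_iff_isPositive _).mpr (isPositive_self_comp_adjoint A)) (hAA.trans_lt hA)
    _ ≤ (√(1 - ‖A‖))⁻¹ := by gcongr

lemma rpow_five_halves_eq {D : ℝ} (hD : 0 ≤ D) : D ^ ((5 : ℝ) / 2) = √D * D ^ 2 := by
  rw [Real.sqrt_eq_rpow, ← Real.rpow_natCast D 2, ← Real.rpow_add' hD (by norm_num)]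
  norm_num

/-- Each Möbius transformation M_A is Lipschitz on the ball, with constant 3D^{5/2},
D = (1-‖A‖)⁻¹. -/
theorem mobius_lipschitz (A : K →L[ℂ] H) (hA : ‖A‖ < 1) (X Y : K →L[ℂ] H)
    (hX : ‖X‖ < 1) (hY : ‖Y‖ < 1) :
    ‖mobius A X - mobius A Y‖ ≤ 3 * ((1 - ‖A‖)⁻¹) ^ ((5 : ℝ) / 2) * ‖X - Y‖ := by
  set D := (1 - ‖A‖)⁻¹
  set L := opInvSqrt (1 - A ∘L A†)
  set R := opSqrt (1 - A† ∘L A)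
  have hD : 0 ≤ D := inv_nonneg.mpr (by linarith)
  have hdiff : mobius A X - mobius A Y = L ∘L (linFrac A X - linFrac A Y) ∘L R := by
    rw [mobius_eq_comp_linFrac, mobius_eq_comp_linFrac, ← comp_sub, ← sub_comp]
  calc ‖mobius A X - mobius A Y‖ ≤ ‖L‖ * (‖linFrac A X - linFrac A Y‖ * ‖R‖) := by
        rw [hdiff]
        exact (opNorm_comp_le _ _).trans (by gcongr; exact opNorm_comp_le _ _)
    _ ≤ √D * (3 * D ^ 2 * ‖X - Y‖ * 1) := by
        gcongr
        · exact norm_opInvSqrt_one_sub_comp_adjoint_le hA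
        · exact norm_linFrac_sub_le hA hX hY
        · exact norm_opSqrt_one_sub_adjoint_comp_self_le_one A
    _ = 3 * D ^ ((5 : ℝ) / 2) * ‖X - Y‖ := by rw [rpow_five_halves_eq hD]; ring
end

section
/- For any operators A, B in the open unit ball B of L(K,H): ‖A‖ ≤ ‖(1-BB*)^{-1/2}(A - BA*B)(1-B*B)^{-1/2}‖. -/
/-!
Put `T = (1 - BB*)^{-1/2} (A - BA*B) (1 - B*B)^{-1/2}`, so that
`A = (1 - BB*)^{1/2} T (1 - B*B)^{1/2} + BA*B`. For unit vectors `k`, `h` with `a = ‖Bk‖`,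
`b = ‖B*h‖` this gives `|⟪Ak, h⟫| ≤ ‖T‖ √(1 - a²) √(1 - b²) + ‖A‖ ab`. Since
`√(1 - a²) √(1 - b²) + ab ≤ 1` and `√(1 - a²) √(1 - b²) ≥ 1 - ‖B‖²`, if `‖T‖ < ‖A‖` then
`‖A‖ ≤ (1 - ‖B‖²) ‖T‖ + ‖B‖² ‖A‖`, which is impossible because `‖B‖ < 1`.
-/

open ContinuousLinearMap

variable {K H : Type*}
  [NormedAddCommGroup H] [InnerProductSpace ℂ H] [CompleteSpace H]
  [NormedAddCommGroup K] [InnerProductSpace ℂ K] [CompleteSpace K]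

open scoped InnerProductSpace

section OperatorSqrt

variable {E : Type*} [NormedAddCommGroup E] [InnerProductSpace ℂ E] [CompleteSpace E]
  {T : E →L[ℂ] E}

lemma isSelfAdjoint_opSqrt (T : E →L[ℂ] E) : IsSelfAdjoint (opSqrt T) :=
  cfc_predicate _ _

lemma opSqrt_comp_opSqrt (hT : 0 ≤ T) : opSqrt T ∘L opSqrt T = T := by
  rw [← mul_def, opSqrt, ← cfc_mul _ _ T]
  conv_rhs => rw [← cfc_id' ℝ T]
  exact cfc_congr fun x hx => Real.mul_self_sqrt (spectrum_nonneg_of_nonneg hT hx)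

lemma sqrt_ne_zero_of_mem_spectrum (hT : IsStrictlyPositive T) {x : ℝ}
    (hx : x ∈ spectrum ℝ T) : Real.sqrt x ≠ 0 :=
  (Real.sqrt_pos.2 (hT.spectrum_pos hx)).ne'

lemma continuousOn_inv_sqrt_spectrum (hT : IsStrictlyPositive T) :
    ContinuousOn (fun x : ℝ => (Real.sqrt x)⁻¹) (spectrum ℝ T) :=
  Real.continuous_sqrt.continuousOn.inv₀ fun _ hx => sqrt_ne_zero_of_mem_spectrum hT hx

lemma opSqrt_comp_opInvSqrt (hT : IsStrictlyPositive T) : opSqrt T ∘L opInvSqrt T = 1 := by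
  rw [← mul_def, opSqrt, opInvSqrt,
    ← cfc_mul _ _ T (hg := continuousOn_inv_sqrt_spectrum hT), ← cfc_one ℝ T]
  exact cfc_congr fun x hx => mul_inv_cancel₀ (sqrt_ne_zero_of_mem_spectrum hT hx)

lemma opInvSqrt_comp_opSqrt (hT : IsStrictlyPositive T) : opInvSqrt T ∘L opSqrt T = 1 := by
  rw [← mul_def, opSqrt, opInvSqrt,
    ← cfc_mul _ _ T (hf := continuousOn_inv_sqrt_spectrum hT), ← cfc_one ℝ T]
  exact cfc_congr fun x hx => inv_mul_cancel₀ (sqrt_ne_zero_of_mem_spectrum hT hx)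

lemma norm_opSqrt_apply_sq (hT : 0 ≤ T) (x : E) :
    ‖opSqrt T x‖ ^ 2 = RCLike.re ⟪T x, x⟫_ℂ := by
  conv_rhs => rw [← opSqrt_comp_opSqrt hT, comp_apply, ← adjoint_inner_right,
    (isSelfAdjoint_opSqrt T).adjoint_eq, inner_self_eq_norm_sq]

lemma opSqrt_comp_conj_comp_opSqrt {F : Type*} [NormedAddCommGroup F] [InnerProductSpace ℂ F]
    [CompleteSpace F] {S : F →L[ℂ] F} (hT : IsStrictlyPositive T) (hS : IsStrictlyPositive S)
    (M : F →L[ℂ] E) : opSqrt T ∘L (opInvSqrt T ∘L M ∘L opInvSqrt S) ∘L opSqrt S = M := by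
  simp only [comp_assoc, opInvSqrt_comp_opSqrt hS]
  rw [← comp_assoc, opSqrt_comp_opInvSqrt hT, one_def, one_def, id_comp, comp_id]

end OperatorSqrt

section Defect

variable {E F : Type*} [NormedAddCommGroup E] [InnerProductSpace ℂ E] [CompleteSpace E]
  [NormedAddCommGroup F] [InnerProductSpace ℂ F] [CompleteSpace F] {C : F →L[ℂ] E}

lemma re_inner_one_sub_comp_adjoint_apply (C : F →L[ℂ] E) (x : E) :
    RCLike.re ⟪(1 - C ∘L adjoint C) x, x⟫_ℂ = ‖x‖ ^ 2 - ‖adjoint C x‖ ^ 2 := by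
  rw [sub_apply, one_apply_eq_self, comp_apply, inner_sub_left, ← adjoint_inner_right, map_sub,
    inner_self_eq_norm_sq, inner_self_eq_norm_sq]

lemma one_sub_comp_adjoint_nonneg (hC : ‖C‖ ≤ 1) : 0 ≤ 1 - C ∘L adjoint C := by
  refine (nonneg_iff_isPositive _).2 <| isPositive_def'.2
    ⟨(IsSelfAdjoint.one _).sub (isPositive_self_comp_adjoint C).isSelfAdjoint, fun x => ?_⟩
  have hCx : ‖adjoint C x‖ ≤ ‖x‖ := by
    calc ‖adjoint C x‖ ≤ ‖adjoint C‖ * ‖x‖ := le_opNorm _ _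
      _ ≤ ‖x‖ := by rw [adjoint.norm_map]; exact mul_le_of_le_one_left (norm_nonneg x) hC
  rw [reApplyInnerSelf_apply, re_inner_one_sub_comp_adjoint_apply, sub_nonneg]
  gcongr

lemma isStrictlyPositive_one_sub_comp_adjoint (hC : ‖C‖ < 1) :
    IsStrictlyPositive (1 - C ∘L adjoint C) := by
  refine ⟨one_sub_comp_adjoint_nonneg hC.le, isUnit_one_sub_of_norm_lt_one ?_⟩
  calc ‖C ∘L adjoint C‖ ≤ ‖C‖ * ‖adjoint C‖ := opNorm_comp_le _ _
    _ = ‖C‖ * ‖C‖ := by rw [adjoint.norm_map]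
    _ < 1 := by nlinarith [norm_nonneg C]

lemma norm_opSqrt_one_sub_comp_adjoint_apply_sq (hC : ‖C‖ ≤ 1) (x : E) :
    ‖opSqrt (1 - C ∘L adjoint C) x‖ ^ 2 = ‖x‖ ^ 2 - ‖adjoint C x‖ ^ 2 := by
  rw [norm_opSqrt_apply_sq (one_sub_comp_adjoint_nonneg hC), re_inner_one_sub_comp_adjoint_apply]

end Defect

lemma mul_add_mul_le_one {s t a b : ℝ} (hsa : s ^ 2 + a ^ 2 = 1) (htb : t ^ 2 + b ^ 2 = 1) :
    s * t + a * b ≤ 1 := by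
  nlinarith [sq_nonneg (s - t), sq_nonneg (a - b)]

lemma one_sub_sq_le_mul {s t a b r : ℝ} (hs : 0 ≤ s) (ht : 0 ≤ t) (ha : 0 ≤ a) (hb : 0 ≤ b)
    (har : a ≤ r) (hbr : b ≤ r) (hsa : s ^ 2 + a ^ 2 = 1) (htb : t ^ 2 + b ^ 2 = 1) :
    1 - r ^ 2 ≤ s * t := by
  rcases le_total s t with hst | hts
  · nlinarith [mul_le_mul_of_nonneg_left hst hs]
  · nlinarith [mul_le_mul_of_nonneg_left hts ht]

lemma mul_add_mul_le_of_sq_add_sq {N M s t a b r : ℝ} (hM : 0 ≤ M) (hNM : N ≤ M)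
    (hs : 0 ≤ s) (ht : 0 ≤ t) (ha : 0 ≤ a) (hb : 0 ≤ b) (har : a ≤ r) (hbr : b ≤ r)
    (hsa : s ^ 2 + a ^ 2 = 1) (htb : t ^ 2 + b ^ 2 = 1) :
    N * (s * t) + M * (a * b) ≤ (1 - r ^ 2) * N + r ^ 2 * M := by
  have h1 := mul_add_mul_le_one hsa htb
  have h2 := one_sub_sq_le_mul hs ht ha hb har hbr hsa htb
  nlinarith [mul_le_mul_of_nonneg_left h1 hM, mul_le_mul_of_nonneg_left h2 (sub_nonneg.2 hNM)]

lemma norm_inner_comp_comp_apply_le {E F G₁ G₂ : Type*} [NormedAddCommGroup E]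
    [InnerProductSpace ℂ E] [CompleteSpace E] [NormedAddCommGroup F] [InnerProductSpace ℂ F]
    [NormedAddCommGroup G₁] [InnerProductSpace ℂ G₁] [NormedAddCommGroup G₂]
    [InnerProductSpace ℂ G₂] [CompleteSpace G₂] (U : G₂ →L[ℂ] E) (T : G₁ →L[ℂ] G₂)
    (R : F →L[ℂ] G₁) (x : F) (y : E) :
    ‖⟪(U ∘L T ∘L R) x, y⟫_ℂ‖ ≤ ‖T‖ * (‖R x‖ * ‖adjoint U y‖) := by
  rw [comp_apply, comp_apply, ← adjoint_inner_right]
  calc ‖⟪T (R x), adjoint U y⟫_ℂ‖ ≤ ‖T (R x)‖ * ‖adjoint U y‖ := norm_inner_le_norm _ _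
    _ ≤ ‖T‖ * ‖R x‖ * ‖adjoint U y‖ := by gcongr; exact le_opNorm _ _
    _ = ‖T‖ * (‖R x‖ * ‖adjoint U y‖) := mul_assoc _ _ _

lemma re_inner_le_of_eq_opSqrt_comp_add {A B T : K →L[ℂ] H} (hB : ‖B‖ ≤ 1)
    (hA : A = opSqrt (1 - B ∘L adjoint B) ∘L T ∘L opSqrt (1 - adjoint B ∘L B)
      + B ∘L adjoint A ∘L B)
    (hTA : ‖T‖ ≤ ‖A‖) {k : K} {h : H} (hk : ‖k‖ = 1) (hh : ‖h‖ = 1) :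
    RCLike.re ⟪A k, h⟫_ℂ ≤ (1 - ‖B‖ ^ 2) * ‖T‖ + ‖B‖ ^ 2 * ‖A‖ := by
  have hB' : ‖adjoint B‖ ≤ 1 := by rwa [adjoint.norm_map]
  have hsk : ‖opSqrt (1 - adjoint B ∘L B) k‖ ^ 2 + ‖B k‖ ^ 2 = 1 := by
    have := norm_opSqrt_one_sub_comp_adjoint_apply_sq hB' k
    rw [adjoint_adjoint, hk] at this
    linarith
  have hth : ‖opSqrt (1 - B ∘L adjoint B) h‖ ^ 2 + ‖adjoint B h‖ ^ 2 = 1 := by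
    rw [norm_opSqrt_one_sub_comp_adjoint_apply_sq hB h, hh]
    ring
  have hBk : ‖B k‖ ≤ ‖B‖ := by simpa [hk] using B.le_opNorm k
  have hBh : ‖adjoint B h‖ ≤ ‖B‖ := by simpa [hh] using (adjoint B).le_opNorm h
  calc RCLike.re ⟪A k, h⟫_ℂ ≤ ‖⟪A k, h⟫_ℂ‖ := RCLike.re_le_norm _
    _ ≤ ‖T‖ * (‖opSqrt (1 - adjoint B ∘L B) k‖ * ‖opSqrt (1 - B ∘L adjoint B) h‖)
        + ‖A‖ * (‖B k‖ * ‖adjoint B h‖) := by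
      conv_lhs => rw [hA, add_apply, inner_add_left]
      refine (norm_add_le _ _).trans (add_le_add ?_ ?_)
      · have := norm_inner_comp_comp_apply_le (opSqrt (1 - B ∘L adjoint B)) T
          (opSqrt (1 - adjoint B ∘L B)) k h
        rwa [(isSelfAdjoint_opSqrt _).adjoint_eq] at this
      · simpa using norm_inner_comp_comp_apply_le B (adjoint A) B k h
    _ ≤ (1 - ‖B‖ ^ 2) * ‖T‖ + ‖B‖ ^ 2 * ‖A‖ :=
      mul_add_mul_le_of_sq_add_sq (norm_nonneg A) hTA (norm_nonneg _) (norm_nonneg _)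
        (norm_nonneg _) (norm_nonneg _) hBk hBh hsk hth

lemma norm_le_of_eq_opSqrt_comp_add {A B T : K →L[ℂ] H} (hB : ‖B‖ < 1)
    (hA : A = opSqrt (1 - B ∘L adjoint B) ∘L T ∘L opSqrt (1 - adjoint B ∘L B)
      + B ∘L adjoint A ∘L B) :
    ‖A‖ ≤ ‖T‖ := by
  by_contra! hTA
  have hB2 : ‖B‖ ^ 2 < 1 := by nlinarith [norm_nonneg B]
  have hbound : ‖A‖ ≤ (1 - ‖B‖ ^ 2) * ‖T‖ + ‖B‖ ^ 2 * ‖A‖ :=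
    opNorm_le_of_re_inner_le (by nlinarith [norm_nonneg T, norm_nonneg A, sq_nonneg ‖B‖])
      fun k h hk hh => re_inner_le_of_eq_opSqrt_comp_add hB.le hA hTA.le hk hh
  nlinarith

theorem norm_le_norm_conjugated_general (A B : K →L[ℂ] H) (hB : ‖B‖ < 1) :
    ‖A‖ ≤ ‖opInvSqrt (1 - B ∘L adjoint B) ∘L (A - B ∘L adjoint A ∘L B) ∘L
      opInvSqrt (1 - adjoint B ∘L B)‖ := by
  have hY : IsStrictlyPositive (1 - adjoint B ∘L B) := by
    simpa using isStrictlyPositive_one_sub_comp_adjoint (C := adjoint B) (by rwa [adjoint.norm_map])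
  refine norm_le_of_eq_opSqrt_comp_add hB ?_
  rw [opSqrt_comp_conj_comp_opSqrt (isStrictlyPositive_one_sub_comp_adjoint hB) hY, sub_add_cancel]

/-- For A, B in the open unit ball of L(K,H):
‖A‖ ≤ ‖(1-BB*)^{-1/2}(A - BA*B)(1-B*B)^{-1/2}‖. -/
theorem norm_le_norm_conjugated (A B : K →L[ℂ] H) (hA : ‖A‖ < 1) (hB : ‖B‖ < 1) :
    ‖A‖ ≤ ‖opInvSqrt (1 - B ∘L adjoint B) ∘L (A - B ∘L adjoint A ∘L B) ∘L
      opInvSqrt (1 - adjoint B ∘L B)‖ :=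
  norm_le_norm_conjugated_general A B hB
end
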